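/- For each k ≥ 1, the set U = {u ∈ {1,3}^k × {2,3}^k ⊆ {1,2,3}^{2k} : for all i ∈ [k], u_i = 1 iff u_{i+k} = 2} is a strong USP of size 2^k and width 2k. -/
import Mathlib


/-- Exactly two of three propositions hold. -/
def ExactlyTwo (P Q R : Prop) : Prop :=
  (P ∧ Q ∧ ¬R) ∨ (P ∧ ¬Q ∧ R) ∨ (¬P ∧ Q ∧ R)

/-- A strong uniquely solvable puzzle of width `k`: a subset `U ⊆ {1,2,3}^k`
(the symbols `1,2,3` are represented by `0,1,2 : Fin 3`) such that for all
permutations `π₁, π₂, π₃` of `U`, either `π₁ = π₂ = π₃` or there exist `u ∈ U`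
and `i ∈ [k]` such that exactly two of `(π₁ u)_i = 1`, `(π₂ u)_i = 2`,
`(π₃ u)_i = 3` hold. -/
def IsStrongUSP {k : ℕ} (U : Set (Fin k → Fin 3)) : Prop :=
  ∀ π₁ π₂ π₃ : Equiv.Perm U, (π₁ = π₂ ∧ π₂ = π₃) ∨
    ∃ u : U, ∃ i : Fin k,
      ExactlyTwo (((π₁ u : U) : Fin k → Fin 3) i = 0)
        (((π₂ u : U) : Fin k → Fin 3) i = 1)
        (((π₃ u : U) : Fin k → Fin 3) i = 2)

def myU (k : ℕ) : Set (Fin (k + k) → Fin 3) :=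
  {u : Fin (k + k) → Fin 3 |
        ∀ i : Fin k,
          (u (Fin.castAdd k i) = 0 ∨ u (Fin.castAdd k i) = 2) ∧
          (u (Fin.natAdd k i) = 1 ∨ u (Fin.natAdd k i) = 2) ∧
          (u (Fin.castAdd k i) = 0 ↔ u (Fin.natAdd k i) = 1)}

lemma f02 : (0 : Fin 3) ≠ 2 := by decide
lemma f01 : (0 : Fin 3) ≠ 1 := by decide
lemma f12 : (1 : Fin 3) ≠ 2 := by decide

-- determined by the 0-set of the first half
lemma myU_ext {k : ℕ} {u v : Fin (k + k) → Fin 3} (hu : u ∈ myU k) (hv : v ∈ myU k)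
    (h : ∀ i : Fin k, u (Fin.castAdd k i) = 0 ↔ v (Fin.castAdd k i) = 0) : u = v := by
  funext j
  refine Fin.addCases (fun i => ?_) (fun i => ?_) j
  · obtain ⟨h1, _, _⟩ := hu i
    obtain ⟨h1', _, _⟩ := hv i
    rcases h1 with h1 | h1 <;> rcases h1' with h1' | h1'
    · rw [h1, h1']
    · exact absurd (((h i).mp h1).symm.trans h1') f02
    · exact absurd (((h i).mpr h1').symm.trans h1) f02
    · rw [h1, h1']
  · obtain ⟨_, h2, h3⟩ := hu i
    obtain ⟨_, h2', h3'⟩ := hv i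
    show u (Fin.natAdd k i) = v (Fin.natAdd k i)
    rcases h2 with h2 | h2 <;> rcases h2' with h2' | h2'
    · rw [h2, h2']
    · exact absurd ((h3'.mp ((h i).mp (h3.mpr h2))).symm.trans h2') f12
    · exact absurd ((h3.mp ((h i).mpr (h3'.mpr h2'))).symm.trans h2) f12
    · rw [h2, h2']

lemma perm_eq {k : ℕ} (π₁ π₃ : Equiv.Perm (myU k))
    (h : ∀ u : myU k, ∀ i : Fin k,
      ((π₁ u : myU k) : Fin (k + k) → Fin 3) (Fin.castAdd k i) = 0 →
      ((π₃ u : myU k) : Fin (k + k) → Fin 3) (Fin.castAdd k i) = 0) : π₁ = π₃ := by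
  classical
  haveI : Fintype (myU k) := Fintype.ofFinite _
  set F : myU k → ℕ := fun u =>
    (Finset.univ.filter fun i : Fin k => (u : Fin (k + k) → Fin 3) (Fin.castAdd k i) = 0).card
    with hF
  have hsub : ∀ u : myU k,
      (Finset.univ.filter fun i : Fin k =>
        ((π₁ u : myU k) : Fin (k+k) → Fin 3) (Fin.castAdd k i) = 0) ⊆
      (Finset.univ.filter fun i : Fin k =>
        ((π₃ u : myU k) : Fin (k+k) → Fin 3) (Fin.castAdd k i) = 0) := by
    intro u i hi
    simp only [Finset.mem_filter, Finset.mem_univ, true_and] at hi ⊢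
    exact h u i hi
  have hle : ∀ u : myU k, F (π₁ u) ≤ F (π₃ u) := fun u => Finset.card_le_card (hsub u)
  have hsum : ∑ u : myU k, F (π₁ u) = ∑ u : myU k, F (π₃ u) := by
    rw [Equiv.sum_comp π₁ F, Equiv.sum_comp π₃ F]
  have heq : ∀ u : myU k, F (π₁ u) = F (π₃ u) := by
    have := (Finset.sum_eq_sum_iff_of_le (fun u _ => hle u)).mp hsum
    exact fun u => this u (Finset.mem_univ u)
  refine Equiv.ext fun u => Subtype.ext ?_
  have hset := Finset.eq_of_subset_of_card_le (hsub u) (le_of_eq (heq u).symm)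
  refine myU_ext (π₁ u).2 (π₃ u).2 (fun i => ?_)
  constructor
  · exact h u i
  · intro hi
    have : i ∈ (Finset.univ.filter fun i : Fin k =>
        ((π₃ u : myU k) : Fin (k+k) → Fin 3) (Fin.castAdd k i) = 0) := by
      simp [hi]
    rw [← hset] at this
    simpa using this

lemma usp_myU (k : ℕ) : IsStrongUSP (myU k) := by
  intro π₁ π₂ π₃
  by_cases hE : ∃ u : myU k, ∃ i : Fin (k + k),
      ExactlyTwo (((π₁ u : myU k) : Fin (k+k) → Fin 3) i = 0)
        (((π₂ u : myU k) : Fin (k+k) → Fin 3) i = 1)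
        (((π₃ u : myU k) : Fin (k+k) → Fin 3) i = 2)
  · right; exact hE
  push_neg at hE
  left
  have h13 : ∀ u : myU k, ∀ i : Fin k,
      ((π₁ u : myU k) : Fin (k+k) → Fin 3) (Fin.castAdd k i) = 0 →
      ((π₃ u : myU k) : Fin (k+k) → Fin 3) (Fin.castAdd k i) = 0 := by
    intro u i hP
    have hne := hE u (Fin.castAdd k i)
    unfold ExactlyTwo at hne
    obtain ⟨hQ1, _, _⟩ := (π₂ u).2 i
    obtain ⟨hR1, _, _⟩ := (π₃ u).2 i
    have hQ : ¬ (((π₂ u : myU k) : Fin (k+k) → Fin 3) (Fin.castAdd k i) = 1) := by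
      rcases hQ1 with h | h
      · exact fun hh => f01 (h.symm.trans hh)
      · exact fun hh => f12 (hh.symm.trans h)
    rcases hR1 with h | h
    · exact h
    · exact absurd (Or.inr (Or.inl ⟨hP, hQ, h⟩)) hne
  have h23 : ∀ u : myU k, ∀ i : Fin k,
      ((π₂ u : myU k) : Fin (k+k) → Fin 3) (Fin.castAdd k i) = 0 →
      ((π₃ u : myU k) : Fin (k+k) → Fin 3) (Fin.castAdd k i) = 0 := by
    intro u i hP
    have hne := hE u (Fin.natAdd k i)
    unfold ExactlyTwo at hne
    obtain ⟨_, _, h2iff⟩ := (π₂ u).2 i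
    obtain ⟨_, hR2, hR3⟩ := (π₃ u).2 i
    have hP' : ¬ (((π₁ u : myU k) : Fin (k+k) → Fin 3) (Fin.natAdd k i) = 0) := by
      obtain ⟨_, h2, _⟩ := (π₁ u).2 i
      rcases h2 with h | h
      · intro hc; rw [hc] at h; exact f01 h
      · intro hc; rw [hc] at h; exact f02 h
    have hQ : ((π₂ u : myU k) : Fin (k+k) → Fin 3) (Fin.natAdd k i) = 1 := h2iff.mp hP
    rcases hR2 with h | h
    · exact hR3.mpr h
    · exact absurd (Or.inr (Or.inr ⟨hP', hQ, h⟩)) hne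
  have e13 := perm_eq π₁ π₃ h13
  have e23 := perm_eq π₂ π₃ h23
  exact ⟨e13.trans e23.symm, e23⟩

def gmap (k : ℕ) (b : Fin k → Bool) : Fin (k + k) → Fin 3 :=
  Fin.append (fun i => if b i then 0 else 2) (fun i => if b i then 1 else 2)

lemma gmap_mem {k : ℕ} (b : Fin k → Bool) : gmap k b ∈ myU k := by
  intro i
  simp only [gmap, Fin.append_left, Fin.append_right]
  cases hb : b i <;> simp [hb]

lemma gmap_zero_iff {k : ℕ} (b : Fin k → Bool) (i : Fin k) :
    gmap k b (Fin.castAdd k i) = 0 ↔ b i = true := by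
  simp only [gmap, Fin.append_left]
  cases hb : b i <;> simp [hb]

lemma card_myU (k : ℕ) : Set.ncard (myU k) = 2 ^ k := by
  classical
  have hg : Function.Bijective (fun b : Fin k → Bool => (⟨gmap k b, gmap_mem b⟩ : myU k)) := by
    constructor
    · intro b b' hbb
      have hv : gmap k b = gmap k b' := congrArg Subtype.val hbb
      funext i
      have h1 := gmap_zero_iff b i
      rw [hv, gmap_zero_iff] at h1
      cases hb : b i <;> cases hb' : b' i <;> simp [hb, hb'] at h1 ⊢
    · rintro ⟨u, hu⟩
      refine ⟨fun i => decide (u (Fin.castAdd k i) = 0), Subtype.ext ?_⟩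
      show gmap k (fun i => decide (u (Fin.castAdd k i) = 0)) = u
      refine myU_ext (gmap_mem _) hu (fun i => ?_)
      rw [gmap_zero_iff]
      simp
  rw [← Nat.card_coe_set_eq, ← Nat.card_congr (Equiv.ofBijective _ hg),
    Nat.card_eq_fintype_card]
  simp

theorem stmt_5 (k : ℕ) (hk : 1 ≤ k) :
    IsStrongUSP {u : Fin (k + k) → Fin 3 |
        ∀ i : Fin k,
          (u (Fin.castAdd k i) = 0 ∨ u (Fin.castAdd k i) = 2) ∧
          (u (Fin.natAdd k i) = 1 ∨ u (Fin.natAdd k i) = 2) ∧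
          (u (Fin.castAdd k i) = 0 ↔ u (Fin.natAdd k i) = 1)} ∧
    Set.ncard {u : Fin (k + k) → Fin 3 |
        ∀ i : Fin k,
          (u (Fin.castAdd k i) = 0 ∨ u (Fin.castAdd k i) = 2) ∧
          (u (Fin.natAdd k i) = 1 ∨ u (Fin.natAdd k i) = 2) ∧
          (u (Fin.castAdd k i) = 0 ↔ u (Fin.natAdd k i) = 1)} = 2 ^ k :=
  ⟨usp_myU k, card_myU k⟩
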